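/- arXiv:2205.15160 — 8 statements merged into one kernel-verified Lean document; each statement's English description precedes it below -/
import Mathlib

section
/- Let t ≥ 2 and let G be a (4P_1, complement of (K_{2,t} + P_1))-free graph with three pairwise non-adjacent vertices v_a, v_b, v_c, and let S_p, S_q (for distinct p, q ∈ {a, b, c}) be the sets of private neighbours of v_p, v_q respectively with respect to {v_a, v_b, v_c} (so S_p and S_q are cliques, v_p is complete to S_p and anticomplete to S_q, and v_q is complete to S_q and anticomplete to S_p). If some vertex x ∈ S_p has two distinct neighbours y_1, y_2 in S_q, then there are at most t − 1 vertices in S_p anticomplete to {y_1, y_2}. -/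
/-! Since `G` is `4P₁`-free, the common non-neighbours of two non-adjacent vertices form a clique;
so `S_p` and `S_q` are cliques and `y₁y₂` is an edge. Then `t` vertices of `S_p` anticomplete to
`{y₁, y₂}`, together with `y₁`, `y₂` and their common neighbour `x`, would induce the forbidden
complement of `K_{2,t} + P₁`. -/

open SimpleGraph

/-- `G` contains an induced copy of the complement of `K_{2,t} + P₁`: a universal vertex `w`
together with a clique `{a₁, a₂}` of size 2 and a clique `B` of size `t`, disjoint and
anticomplete to each other. -/
def HasCoK2tP1 {V : Type} (G : SimpleGraph V) (t : ℕ) : Prop :=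
  ∃ (w a₁ a₂ : V) (B : Finset V),
    B.card = t ∧ a₁ ≠ a₂ ∧ G.Adj a₁ a₂ ∧
    w ∉ B ∧ a₁ ∉ B ∧ a₂ ∉ B ∧ w ≠ a₁ ∧ w ≠ a₂ ∧
    G.Adj w a₁ ∧ G.Adj w a₂ ∧ (∀ b ∈ B, G.Adj w b) ∧
    (∀ b ∈ B, ∀ b' ∈ B, b ≠ b' → G.Adj b b') ∧
    (∀ b ∈ B, ¬ G.Adj a₁ b ∧ ¬ G.Adj a₂ b)

namespace SimpleGraph

variable {V : Type} {G : SimpleGraph V}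

theorem isClique_commonNonNeighbors_of_compl_cliqueFree_four (h : Gᶜ.CliqueFree 4) {u v : V}
    (huv : u ≠ v) (nuv : ¬G.Adj u v) :
    G.IsClique {z | z ≠ u ∧ z ≠ v ∧ ¬G.Adj z u ∧ ¬G.Adj z v} := by
  classical
  rintro z ⟨hzu, hzv, nzu, nzv⟩ z' ⟨hz'u, hz'v, nz'u, nz'v⟩ hzz'
  by_contra nzz'
  have hcompl : Gᶜ.IsNClique 3 {z', u, v} :=
    is3Clique_triple_iff.2 ⟨⟨hz'u, nz'u⟩, ⟨hz'v, nz'v⟩, ⟨huv, nuv⟩⟩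
  refine h _ (hcompl.insert (a := z) ?_)
  simp only [Finset.mem_insert, Finset.mem_singleton, forall_eq_or_imp, forall_eq, compl_adj]
  exact ⟨⟨hzz', nzz'⟩, ⟨hzu, nzu⟩, ⟨hzv, nzv⟩⟩

theorem hasCoK2tP1_of_isClique {t : ℕ} {w a₁ a₂ : V} {B : Finset V} (hB : B.card = t)
    (ha : a₁ ≠ a₂) (haa : G.Adj a₁ a₂) (hwa₁ : G.Adj w a₁) (hwa₂ : G.Adj w a₂)
    (hBclique : G.IsClique (B : Set V)) (hwB : ∀ b ∈ B, G.Adj w b)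
    (haB : ∀ b ∈ B, ¬G.Adj a₁ b ∧ ¬G.Adj a₂ b) : HasCoK2tP1 G t :=
  ⟨w, a₁, a₂, B, hB, ha, haa, fun hw => (haB w hw).1 hwa₁.symm,
    fun ha₁ => (haB a₁ ha₁).2 haa.symm, fun ha₂ => (haB a₂ ha₂).1 haa,
    hwa₁.ne, hwa₂.ne, hwa₁, hwa₂, hwB, fun _ hb _ hb' => hBclique hb hb', haB⟩

theorem ncard_le_of_not_hasCoK2tP1 {t : ℕ} (hfree : ¬HasCoK2tP1 G t) {w a₁ a₂ : V} {S : Set V}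
    (ha : a₁ ≠ a₂) (haa : G.Adj a₁ a₂) (hwa₁ : G.Adj w a₁) (hwa₂ : G.Adj w a₂)
    (hS : G.IsClique S) (hwS : ∀ b ∈ S, G.Adj w b) (haS : ∀ b ∈ S, ¬G.Adj a₁ b ∧ ¬G.Adj a₂ b) :
    S.ncard ≤ t - 1 := by
  by_contra! hlt
  have hfin : S.Finite := Set.finite_of_ncard_pos (by omega)
  obtain ⟨B, hBS, hB⟩ := Finset.exists_subset_card_eq (s := hfin.toFinset) (n := t)
    (by rw [← Set.ncard_eq_toFinset_card S hfin]; omega)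
  have hBS' : ∀ b ∈ B, b ∈ S := fun b hb => hfin.mem_toFinset.1 (hBS hb)
  exact hfree <| hasCoK2tP1_of_isClique hB ha haa hwa₁ hwa₂
    (hS.subset hBS') (fun b hb => hwS b (hBS' b hb))
    (fun b hb => haS b (hBS' b hb))

end SimpleGraph

theorem stmt7_general {V : Type} (G : SimpleGraph V) (t : ℕ)
    (h4P1free : Gᶜ.CliqueFree 4)
    (hfree : ¬ HasCoK2tP1 G t)
    (va vb vc : V)
    (hbc : vb ≠ vc) (hac : va ≠ vc)
    (nbc : ¬ G.Adj vb vc) (nac : ¬ G.Adj va vc)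
    -- the sets of private neighbours of `va` and `vb` w.r.t. `{va, vb, vc}`
    (Sp Sq : Set V)
    (hSp : Sp = {x : V | x ≠ va ∧ x ≠ vb ∧ x ≠ vc ∧
        G.Adj x va ∧ ¬ G.Adj x vb ∧ ¬ G.Adj x vc})
    (hSq : Sq = {x : V | x ≠ va ∧ x ≠ vb ∧ x ≠ vc ∧
        G.Adj x vb ∧ ¬ G.Adj x va ∧ ¬ G.Adj x vc})
    (x : V) (hx : x ∈ Sp)
    (y₁ y₂ : V) (hy₁ : y₁ ∈ Sq) (hy₂ : y₂ ∈ Sq) (hy : y₁ ≠ y₂)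
    (hxy₁ : G.Adj x y₁) (hxy₂ : G.Adj x y₂) :
    {z : V | z ∈ Sp ∧ ¬ G.Adj z y₁ ∧ ¬ G.Adj z y₂}.ncard ≤ t - 1 := by
  have hSpClique : G.IsClique Sp :=
    (isClique_commonNonNeighbors_of_compl_cliqueFree_four h4P1free hbc nbc).subset <| by
      rw [hSp]
      rintro z ⟨-, hzb, hzc, -, nzb, nzc⟩
      exact ⟨hzb, hzc, nzb, nzc⟩
  have hy₁₂ : G.Adj y₁ y₂ := by
    rw [hSq] at hy₁ hy₂
    obtain ⟨hy₁a, -, hy₁c, -, ny₁a, ny₁c⟩ := hy₁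
    obtain ⟨hy₂a, -, hy₂c, -, ny₂a, ny₂c⟩ := hy₂
    exact isClique_commonNonNeighbors_of_compl_cliqueFree_four h4P1free hac nac
      ⟨hy₁a, hy₁c, ny₁a, ny₁c⟩ ⟨hy₂a, hy₂c, ny₂a, ny₂c⟩ hy
  refine ncard_le_of_not_hasCoK2tP1 hfree hy hy₁₂ hxy₁ hxy₂ (hSpClique.subset fun z hz => hz.1) ?_
    fun z hz => ⟨fun h => hz.2.1 h.symm, fun h => hz.2.2 h.symm⟩
  rintro z ⟨hz, nzy₁, -⟩
  exact hSpClique hx hz (by rintro rfl; exact nzy₁ hxy₁)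

theorem stmt7 {V : Type} (G : SimpleGraph V) (t : ℕ) (ht : 2 ≤ t)
    (h4P1free : Gᶜ.CliqueFree 4)
    (hfree : ¬ HasCoK2tP1 G t)
    (va vb vc : V)
    (hab : va ≠ vb) (hbc : vb ≠ vc) (hac : va ≠ vc)
    (nab : ¬ G.Adj va vb) (nbc : ¬ G.Adj vb vc) (nac : ¬ G.Adj va vc)
    -- the sets of private neighbours of `va` and `vb` w.r.t. `{va, vb, vc}`
    (Sp Sq : Set V)
    (hSp : Sp = {x : V | x ≠ va ∧ x ≠ vb ∧ x ≠ vc ∧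
        G.Adj x va ∧ ¬ G.Adj x vb ∧ ¬ G.Adj x vc})
    (hSq : Sq = {x : V | x ≠ va ∧ x ≠ vb ∧ x ≠ vc ∧
        G.Adj x vb ∧ ¬ G.Adj x va ∧ ¬ G.Adj x vc})
    (x : V) (hx : x ∈ Sp)
    (y₁ y₂ : V) (hy₁ : y₁ ∈ Sq) (hy₂ : y₂ ∈ Sq) (hy : y₁ ≠ y₂)
    (hxy₁ : G.Adj x y₁) (hxy₂ : G.Adj x y₂) :
    {z : V | z ∈ Sp ∧ ¬ G.Adj z y₁ ∧ ¬ G.Adj z y₂}.ncard ≤ t - 1 :=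
  stmt7_general G t h4P1free hfree va vb vc hbc hac nbc nac Sp Sq hSp hSq x hx y₁ y₂ hy₁ hy₂ hy hxy₁
    hxy₂
end

section
/- Let G be a graph that is vertex-partitioned into six independent sets A, B, C, D, E, F where R = A ∪ B ∪ C and S = D ∪ E ∪ F, every vertex of R has at most one neighbour in each of D, E, F, and every vertex of S has at most one neighbour in each of A, B, C. Let G' be obtained from G by adding all edges between distinct classes among {A, B, C} and all edges between distinct classes among {D, E, F}. Then G' contains no induced subgraph isomorphic to P_3 + P_2 + P_1 (the disjoint union of a path on three vertices, an edge, and an isolated vertex). -/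
open SimpleGraph

def IndepIn {V : Type} (G : SimpleGraph V) (S : Set V) : Prop :=
  ∀ u ∈ S, ∀ v ∈ S, ¬ G.Adj u v

def BetweenSets {V : Type} (u v : V) (S T : Set V) : Prop :=
  (u ∈ S ∧ v ∈ T) ∨ (u ∈ T ∧ v ∈ S)

/-- `f` is an induced copy in `G` of the pattern graph on `Fin n` with edge set `E`. -/
def IsInducedPattern {V : Type} (G : SimpleGraph V) {n : ℕ}
    (E : Set (Sym2 (Fin n))) (f : Fin n → V) : Prop :=
  Function.Injective f ∧ ∀ i j : Fin n, G.Adj (f i) (f j) ↔ s(i, j) ∈ E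

/-!
Encode the partition by a class map `κ : V → Fin 6` together with the side of each class; `G'` is
then `G` joined with all edges between distinct classes of the same side. Within one side,
non-adjacency in `G'` means lying in the same class, and across the sides the edges of `G'` are
those of `G`. If a vertex `z` on the side of `b` is anticomplete to an induced path `a b c`, then
`z` and `b` share a class, which forces `a` and `c` onto the other side and, being non-adjacent,
into one class; as `G`-neighbours of `b` in one class of the other side, `a = c`. In an induced
`P₃ + P₂ + P₁` the isolated vertex and both ends of the `P₂` could serve as `z`, so all three are
off the side of the middle vertex of the `P₃`; being non-adjacent to the isolated vertex, the ends
of the `P₂` then share its class, yet they are adjacent.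
-/

theorem Bool.eq_of_ne_of_ne {a b c : Bool} (ha : a ≠ c) (hb : b ≠ c) : a = b :=
  (Bool.eq_not_of_ne ha).trans (Bool.eq_not_of_ne hb).symm

namespace SimpleGraph

variable {V : Type} {ι : Type*}

def joinWithinSides (G : SimpleGraph V) (κ : V → ι) (side : ι → Bool) : SimpleGraph V where
  Adj u v := G.Adj u v ∨ (side (κ u) = side (κ v) ∧ κ u ≠ κ v)
  symm.symm _ _ := Or.imp Adj.symm fun h => ⟨h.1.symm, h.2.symm⟩
  loopless.irrefl _ h := h.elim G.irrefl fun h => h.2 rfl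

@[simp]
theorem joinWithinSides_adj {G : SimpleGraph V} {κ : V → ι} {side : ι → Bool} {u v : V} :
    (G.joinWithinSides κ side).Adj u v ↔ G.Adj u v ∨ (side (κ u) = side (κ v) ∧ κ u ≠ κ v) :=
  Iff.rfl

namespace joinWithinSides

variable {G : SimpleGraph V} {κ : V → ι} {side : ι → Bool} {u v : V}

theorem eq_of_not_adj (hs : side (κ u) = side (κ v))
    (h : ¬ (G.joinWithinSides κ side).Adj u v) : κ u = κ v :=
  by_contra fun hne => h (Or.inr ⟨hs, hne⟩)

theorem not_adj_of_eq (hindep : ∀ u v, G.Adj u v → κ u ≠ κ v) (h : κ u = κ v) :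
    ¬ (G.joinWithinSides κ side).Adj u v := by
  rintro (hG | ⟨-, hne⟩)
  exacts [hindep u v hG h, hne h]

theorem adj_of_side_ne (hs : side (κ u) ≠ side (κ v))
    (h : (G.joinWithinSides κ side).Adj u v) : G.Adj u v :=
  h.resolve_right fun h' => hs h'.1

theorem eq_of_isolated_of_sameSide (hindep : ∀ u v, G.Adj u v → κ u ≠ κ v)
    (hdeg : ∀ u i, side (κ u) ≠ side i → (G.neighborSet u ∩ κ ⁻¹' {i}).Subsingleton)
    {a b c z : V} (hab : (G.joinWithinSides κ side).Adj a b)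
    (hbc : (G.joinWithinSides κ side).Adj b c) (hac : ¬ (G.joinWithinSides κ side).Adj a c)
    (haz : ¬ (G.joinWithinSides κ side).Adj a z) (hbz : ¬ (G.joinWithinSides κ side).Adj b z)
    (hcz : ¬ (G.joinWithinSides κ side).Adj c z) (hz : side (κ z) = side (κ b)) : a = c := by
  have hbz_cls : κ b = κ z := eq_of_not_adj hz.symm hbz
  have ha : side (κ a) ≠ side (κ b) := fun h =>
    not_adj_of_eq hindep ((eq_of_not_adj (h.trans hz.symm) haz).trans hbz_cls.symm) hab
  have hc : side (κ c) ≠ side (κ b) := fun h =>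
    not_adj_of_eq hindep (hbz_cls.trans (eq_of_not_adj (h.trans hz.symm) hcz).symm) hbc
  have hac_cls : κ a = κ c := eq_of_not_adj (Bool.eq_of_ne_of_ne ha hc) hac
  exact hdeg b (κ a) (Ne.symm ha) ⟨(adj_of_side_ne ha hab).symm, rfl⟩
    ⟨adj_of_side_ne (Ne.symm hc) hbc, hac_cls.symm⟩

theorem not_exists_isInducedPattern_P3_P2_P1 (hindep : ∀ u v, G.Adj u v → κ u ≠ κ v)
    (hdeg : ∀ u i, side (κ u) ≠ side i → (G.neighborSet u ∩ κ ⁻¹' {i}).Subsingleton) :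
    ¬ ∃ f : Fin 6 → V, IsInducedPattern (G.joinWithinSides κ side)
      ({s(0, 1), s(1, 2), s(3, 4)} : Set (Sym2 (Fin 6))) f := by
  rintro ⟨f, hinj, hf⟩
  have adj (i j : Fin 6) (h : s(i, j) = s(0, 1) ∨ s(i, j) = s(1, 2) ∨ s(i, j) = s(3, 4)) :
      (G.joinWithinSides κ side).Adj (f i) (f j) := (hf i j).2 h
  have nonadj (i j : Fin 6) (h : s(i, j) ≠ s(0, 1) ∧ s(i, j) ≠ s(1, 2) ∧ s(i, j) ≠ s(3, 4)) :
      ¬ (G.joinWithinSides κ side).Adj (f i) (f j) := fun h' => by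
    simpa [h.1, h.2.1, h.2.2] using (hf i j).1 h'
  have off_middle_side (z : Fin 6) (hz : z = 3 ∨ z = 4 ∨ z = 5) :
      side (κ (f z)) ≠ side (κ (f 1)) := fun hside => by
    refine absurd (hinj (eq_of_isolated_of_sameSide hindep hdeg (adj 0 1 (by simp))
      (adj 1 2 (by simp)) (nonadj 0 2 (by decide)) ?_ ?_ ?_ hside)) (by decide)
    all_goals rcases hz with rfl | rfl | rfl <;> exact nonadj _ _ (by decide)
  have h3 := off_middle_side 3 (by simp)
  have h4 := off_middle_side 4 (by simp)
  have h5 := off_middle_side 5 (by simp)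
  have e3 : κ (f 3) = κ (f 5) :=
    eq_of_not_adj (Bool.eq_of_ne_of_ne h3 h5) (nonadj 3 5 (by decide))
  have e4 : κ (f 4) = κ (f 5) :=
    eq_of_not_adj (Bool.eq_of_ne_of_ne h4 h5) (nonadj 4 5 (by decide))
  exact not_adj_of_eq hindep (e3.trans e4.symm) (adj 3 4 (by simp))

end joinWithinSides

end SimpleGraph

theorem Set.exists_eq_preimage_singleton_of_pairwise_disjoint {V ι : Type*} {X : ι → Set V}
    (hdisj : Pairwise fun i j => Disjoint (X i) (X j)) (hcover : ∀ v, ∃ i, v ∈ X i) :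
    ∃ κ : V → ι, ∀ i, X i = κ ⁻¹' {i} := by
  choose κ hκ using hcover
  refine ⟨κ, fun i => Set.ext fun v => ⟨fun h => by_contra fun hne => ?_, fun h => h ▸ hκ v⟩⟩
  exact Set.disjoint_left.mp (hdisj hne) (hκ v) h

theorem stmt9 {V : Type} (G G' : SimpleGraph V) (A B C D E F : Set V)
    (hdisj : ∀ i j : Fin 6, i ≠ j →
      Disjoint (![A, B, C, D, E, F] i) (![A, B, C, D, E, F] j))
    (hcover : A ∪ B ∪ C ∪ D ∪ E ∪ F = Set.univ)
    (hindep : ∀ i : Fin 6, IndepIn G (![A, B, C, D, E, F] i))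
    (hdegR : ∀ v ∈ A ∪ B ∪ C,
      (G.neighborSet v ∩ D).Subsingleton ∧ (G.neighborSet v ∩ E).Subsingleton ∧
      (G.neighborSet v ∩ F).Subsingleton)
    (hdegS : ∀ v ∈ D ∪ E ∪ F,
      (G.neighborSet v ∩ A).Subsingleton ∧ (G.neighborSet v ∩ B).Subsingleton ∧
      (G.neighborSet v ∩ C).Subsingleton)
    (hG' : ∀ u v : V, G'.Adj u v ↔ (G.Adj u v ∨ (u ≠ v ∧
      (BetweenSets u v A B ∨ BetweenSets u v A C ∨ BetweenSets u v B C ∨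
       BetweenSets u v D E ∨ BetweenSets u v D F ∨ BetweenSets u v E F)))) :
    -- `G'` has no induced copy of `P₃ + P₂ + P₁`
    ¬ ∃ f : Fin 6 → V, IsInducedPattern G'
      ({s(0, 1), s(1, 2), s(3, 4)} : Set (Sym2 (Fin 6))) f := by
  obtain ⟨κ, hκ⟩ := Set.exists_eq_preimage_singleton_of_pairwise_disjoint hdisj fun v => by
    simpa [Fin.exists_fin_succ, or_assoc] using Set.eq_univ_iff_forall.mp hcover v
  have hadj_ne : ∀ u v, G.Adj u v → κ u ≠ κ v := fun u v h e =>
    (hκ (κ u) ▸ hindep (κ u)) u rfl v e.symm h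
  obtain ⟨rfl, rfl, rfl, rfl, rfl, rfl⟩ : A = κ ⁻¹' {0} ∧ B = κ ⁻¹' {1} ∧ C = κ ⁻¹' {2} ∧
      D = κ ⁻¹' {3} ∧ E = κ ⁻¹' {4} ∧ F = κ ⁻¹' {5} :=
    ⟨hκ 0, hκ 1, hκ 2, hκ 3, hκ 4, hκ 5⟩
  let side : Fin 6 → Bool := fun i => decide ((i : ℕ) < 3)
  have hdeg : ∀ u i, side (κ u) ≠ side i → (G.neighborSet u ∩ κ ⁻¹' {i}).Subsingleton := by
    intro u i hs
    have hR := hdegR u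
    have hS := hdegS u
    simp only [Set.mem_union, Set.mem_preimage, Set.mem_singleton_iff] at hR hS
    generalize κ u = k at hR hS hs
    fin_cases k <;> fin_cases i <;> simp_all [side]
  obtain rfl : G' = G.joinWithinSides κ side := by
    ext u v
    rw [hG', joinWithinSides_adj]
    refine or_congr_right ?_
    by_cases huv : u = v
    · simp [huv]
    · simp only [BetweenSets, Set.mem_preimage, Set.mem_singleton_iff, ne_eq, huv,
        not_false_eq_true, true_and, side]
      generalize κ u = a
      generalize κ v = b
      revert a b
      decide
  exact joinWithinSides.not_exists_isInducedPattern_P3_P2_P1 hadj_ne hdeg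
end

section
/- Let W be a graph of maximum degree at most 3 with a proper 3-colouring in which no vertex has two neighbours of the same colour, and suppose any two vertices of W have at most one common neighbour. Let g(W) be obtained from W by adding all edges within each colour class. Then every copy of K_4 in g(W) is monochromatic. -/
/-! Among four vertices with three colours, two distinct ones `x`, `y` share a colour. A vertex
of the clique with another colour is adjacent in `W` to both of them, so it would have two
neighbours of the same colour. -/

namespace SimpleGraph

variable {V α : Type*} {W F : SimpleGraph V} {color : V → α}

theorem IsClique.color_eq_of_color_eq
    (hF : ∀ u v, F.Adj u v → color u = color v ∨ W.Adj u v)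
    (hnotwo : ∀ v x y, W.Adj v x → W.Adj v y → x ≠ y → color x ≠ color y)
    {s : Set V} (hs : F.IsClique s) {x y z : V} (hx : x ∈ s) (hy : y ∈ s) (hz : z ∈ s)
    (hxy : x ≠ y) (hc : color x = color y) : color z = color x := by
  by_contra hzx
  have hzy : color z ≠ color y := hc ▸ hzx
  have hWx : W.Adj z x := (hF z x (hs hz hx (by rintro rfl; exact hzx rfl))).resolve_left hzx
  have hWy : W.Adj z y := (hF z y (hs hz hy (by rintro rfl; exact hzy rfl))).resolve_left hzy
  exact hnotwo z x y hWx hWy hxy hc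

end SimpleGraph

theorem stmt11_general {V : Type} (W : SimpleGraph V) (color : V → Fin 3)
    (hnotwo : ∀ v x y : V, W.Adj v x → W.Adj v y → x ≠ y → color x ≠ color y)
    -- `F` is the graph `g(W)` obtained by completing each colour class
    (F : SimpleGraph V)
    (hF : ∀ u v : V, F.Adj u v ↔ (u ≠ v ∧ (color u = color v ∨ W.Adj u v))) :
    ∀ s : Finset V, F.IsNClique 4 s → ∀ u ∈ s, ∀ v ∈ s, color u = color v := by
  intro s hs u hu v hv
  obtain ⟨x, hx, y, hy, hxy, hc⟩ :=
    Finset.exists_ne_map_eq_of_card_lt_of_maps_to (s := s) (t := Finset.univ)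
      (by simp [hs.card_eq]) fun a _ => Finset.mem_univ (color a)
  have hF' : ∀ u v, F.Adj u v → color u = color v ∨ W.Adj u v := fun u v h => ((hF u v).1 h).2
  have hmono : ∀ z ∈ s, color z = color x := fun z hz =>
    hs.isClique.color_eq_of_color_eq hF' hnotwo hx hy hz hxy hc
  exact (hmono u hu).trans (hmono v hv).symm

theorem stmt11 {V : Type} (W : SimpleGraph V) (color : V → Fin 3)
    (hdeg : ∀ v : V, (W.neighborSet v).ncard ≤ 3)
    (hproper : ∀ u v : V, W.Adj u v → color u ≠ color v)
    (hnotwo : ∀ v x y : V, W.Adj v x → W.Adj v y → x ≠ y → color x ≠ color y)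
    (hcommon : ∀ u v : V, u ≠ v → (W.neighborSet u ∩ W.neighborSet v).Subsingleton)
    -- `F` is the graph `g(W)` obtained by completing each colour class
    (F : SimpleGraph V)
    (hF : ∀ u v : V, F.Adj u v ↔ (u ≠ v ∧ (color u = color v ∨ W.Adj u v))) :
    ∀ s : Finset V, F.IsNClique 4 s → ∀ u ∈ s, ∀ v ∈ s, color u = color v :=
  stmt11_general W color hnotwo F hF
end

section
/- Let W be a triangle-free graph with a proper 4-colouring in which no vertex has two neighbours of the same colour. Let h(W) be obtained from W by adding all edges within each colour class. Then every copy of K_3 in h(W) is monochromatic, and consequently h(W) contains no induced subgraph isomorphic to the complement of (K_{2,2} + P_1). -/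
/-!
In `h(W)` a pair of vertices of the same colour may be adjacent for free, but a pair of
different colours must be an edge of `W`. In a triangle of `h(W)` with three colours all three
edges lie in `W`, which is triangle-free; with exactly two colours, the vertex of the odd colour
has two `W`-neighbours of the same colour. Hence triangles of `h(W)` are monochromatic. In the
complement of `K_{2,2} + P₁` the universal vertex lies in a triangle with each of the two
anticomplete edges, so all five vertices share its colour and would form a clique of `h(W)`.
-/

open SimpleGraph

namespace SimpleGraph

variable {V ι : Type*}

/-- The graph `h(W)`. -/
def fillColorClasses (W : SimpleGraph V) (color : V → ι) : SimpleGraph V where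
  Adj u v := u ≠ v ∧ (color u = color v ∨ W.Adj u v)
  symm := ⟨fun _ _ ⟨hne, h⟩ => ⟨hne.symm, h.imp Eq.symm fun h => h.symm⟩⟩
  loopless := ⟨fun _ h => h.1 rfl⟩

variable {W : SimpleGraph V} {color : V → ι}

theorem color_eq_of_fillColorClasses_triangle (hW : W.CliqueFree 3)
    (hrainbow : ∀ v, (W.neighborSet v).InjOn color) {a b c : V}
    (hab : (W.fillColorClasses color).Adj a b) (hac : (W.fillColorClasses color).Adj a c)
    (hbc : (W.fillColorClasses color).Adj b c) :
    color a = color b ∧ color a = color c := by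
  have rainbow_at_a : W.Adj a b → W.Adj a c → color b ≠ color c :=
    fun h h' e => hbc.1 (hrainbow a h h' e)
  have rainbow_at_b : W.Adj a b → W.Adj b c → color a ≠ color c :=
    fun h h' e => hac.1 (hrainbow b h.symm h' e)
  have rainbow_at_c : W.Adj a c → W.Adj b c → color a ≠ color b :=
    fun h h' e => hab.1 (hrainbow c h.symm h'.symm e)
  have not_triangle : ¬ (W.Adj a b ∧ W.Adj a c ∧ W.Adj b c) :=
    fun h => by classical exact hW {a, b, c} (is3Clique_triple_iff.mpr h)
  obtain ⟨-, h₁ | h₁⟩ := hab <;> obtain ⟨-, h₂ | h₂⟩ := hac <;> obtain ⟨-, h₃ | h₃⟩ := hbc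
  · exact ⟨h₁, h₂⟩
  · exact ⟨h₁, h₂⟩
  · exact ⟨h₁, h₁.trans h₃⟩
  · exact absurd h₁ (rainbow_at_c h₂ h₃)
  · exact ⟨h₂.trans h₃.symm, h₂⟩
  · exact absurd h₂ (rainbow_at_b h₁ h₃)
  · exact absurd h₃ (rainbow_at_a h₁ h₂)
  · exact absurd ⟨h₁, h₂, h₃⟩ not_triangle

theorem IsNClique.color_eq_of_fillColorClasses (hW : W.CliqueFree 3)
    (hrainbow : ∀ v, (W.neighborSet v).InjOn color) {s : Finset V}
    (hs : (W.fillColorClasses color).IsNClique 3 s) {u v : V} (hu : u ∈ s) (hv : v ∈ s) :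
    color u = color v := by
  classical
  obtain ⟨a, b, c, hab, hac, hbc, rfl⟩ := is3Clique_iff.mp hs
  obtain ⟨eb, ec⟩ := color_eq_of_fillColorClasses_triangle hW hrainbow hab hac hbc
  have h : ∀ x ∈ ({a, b, c} : Finset V), color x = color a := by simp [← eb, ← ec]
  exact (h u hu).trans (h v hv).symm

end SimpleGraph

theorem not_isInducedPattern_fillColorClasses {V : Type} {ι : Type*} {W : SimpleGraph V}
    {color : V → ι} (hW : W.CliqueFree 3) (hrainbow : ∀ v, (W.neighborSet v).InjOn color)
    (f : Fin 5 → V) :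
    ¬ IsInducedPattern (W.fillColorClasses color)
      ({s(0, 1), s(0, 2), s(0, 3), s(0, 4), s(1, 2), s(3, 4)} : Set (Sym2 (Fin 5))) f := by
  rintro ⟨hf, hadj⟩
  have adj (i j : Fin 5) (h : _) := (hadj i j).mpr h
  obtain ⟨h₁, -⟩ := color_eq_of_fillColorClasses_triangle hW hrainbow
    (adj 0 1 (by simp)) (adj 0 2 (by simp)) (adj 1 2 (by simp))
  obtain ⟨h₃, -⟩ := color_eq_of_fillColorClasses_triangle hW hrainbow
    (adj 0 3 (by simp)) (adj 0 4 (by simp)) (adj 3 4 (by simp))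
  have h13 := (hadj 1 3).mp ⟨hf.ne (by decide), Or.inl (h₁.symm.trans h₃)⟩
  simp at h13

theorem stmt12_general {V : Type} (W : SimpleGraph V) (color : V → Fin 4)
    (htriangle : W.CliqueFree 3)
    (hnotwo : ∀ v x y : V, W.Adj v x → W.Adj v y → x ≠ y → color x ≠ color y)
    -- `F` is the graph `h(W)` obtained by completing each colour class
    (F : SimpleGraph V)
    (hF : ∀ u v : V, F.Adj u v ↔ (u ≠ v ∧ (color u = color v ∨ W.Adj u v))) :
    (∀ s : Finset V, F.IsNClique 3 s → ∀ u ∈ s, ∀ v ∈ s, color u = color v) ∧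
    -- `F` has no induced copy of the complement of `K_{2,2} + P₁`:
    -- a universal vertex `0`, cliques `{1, 2}` and `{3, 4}`, anticomplete to each other
    ¬ ∃ f : Fin 5 → V, IsInducedPattern F
      ({s(0, 1), s(0, 2), s(0, 3), s(0, 4), s(1, 2), s(3, 4)} : Set (Sym2 (Fin 5))) f := by
  have hrainbow : ∀ v, (W.neighborSet v).InjOn color := fun v x hx y hy hxy =>
    by_contra fun hne => hnotwo v x y hx hy hne hxy
  obtain rfl : F = W.fillColorClasses color := by ext u v; exact hF u v
  exact ⟨fun s hs u hu v hv => hs.color_eq_of_fillColorClasses htriangle hrainbow hu hv,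
    fun ⟨f, hf⟩ => not_isInducedPattern_fillColorClasses htriangle hrainbow f hf⟩

theorem stmt12 {V : Type} (W : SimpleGraph V) (color : V → Fin 4)
    (htriangle : W.CliqueFree 3)
    (hproper : ∀ u v : V, W.Adj u v → color u ≠ color v)
    (hnotwo : ∀ v x y : V, W.Adj v x → W.Adj v y → x ≠ y → color x ≠ color y)
    -- `F` is the graph `h(W)` obtained by completing each colour class
    (F : SimpleGraph V)
    (hF : ∀ u v : V, F.Adj u v ↔ (u ≠ v ∧ (color u = color v ∨ W.Adj u v))) :
    (∀ s : Finset V, F.IsNClique 3 s → ∀ u ∈ s, ∀ v ∈ s, color u = color v) ∧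
    -- `F` has no induced copy of the complement of `K_{2,2} + P₁`:
    -- a universal vertex `0`, cliques `{1, 2}` and `{3, 4}`, anticomplete to each other
    ¬ ∃ f : Fin 5 → V, IsInducedPattern F
      ({s(0, 1), s(0, 2), s(0, 3), s(0, 4), s(1, 2), s(3, 4)} : Set (Sym2 (Fin 5))) f :=
  stmt12_general W color htriangle hnotwo F hF
end

section
/- Let G be a 3P_1-free graph (no independent set of size 3), let t ≥ 2, and suppose G has no induced subgraph isomorphic to the complement of (K_{3,t} + P_1). Let S_P and S_Q be (not necessarily disjoint) vertex sets of G and suppose some vertex v is complete to both S_P and S_Q. Then there is no induced matching {p_1q_1, …, p_mq_m} with m = R(3,t) + 6, p_1, …, p_m ∈ S_P, q_1, …, q_m ∈ S_Q, where R(3,t) is the Ramsey number (every graph on R(3,t) vertices contains an independent set of size 3 or a clique of size t). -/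
/-!
Ramsey's theorem applied to the `q`-side of the matching yields a clique `B` of size `t`
(its first alternative, an independent triple, is excluded), and `R(3,3) = 6` applied to
six further `p`'s yields a triangle `A`. The matching is induced, so `A` and `B` are
disjoint and anticomplete, and both lie in the neighbourhood of `v`: together with `v` they
induce the complement of `K_{3,t} + P₁`.
-/

open SimpleGraph

/-- `G` contains an induced copy of the complement of `K_{3,t} + P₁`: a universal vertex `w`
together with disjoint anticomplete cliques `A` of size 3 and `B` of size `t`. -/
def HasCoK3tP1 {V : Type} (G : SimpleGraph V) (t : ℕ) : Prop :=
  ∃ (w : V) (A B : Finset V),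
    A.card = 3 ∧ B.card = t ∧ Disjoint A B ∧ w ∉ A ∧ w ∉ B ∧
    (∀ a ∈ A, ∀ a' ∈ A, a ≠ a' → G.Adj a a') ∧
    (∀ b ∈ B, ∀ b' ∈ B, b ≠ b' → G.Adj b b') ∧
    (∀ a ∈ A, G.Adj w a) ∧ (∀ b ∈ B, G.Adj w b) ∧
    (∀ a ∈ A, ∀ b ∈ B, ¬ G.Adj a b)

open Finset

namespace SimpleGraph

variable {V W : Type} {G : SimpleGraph V}

lemma compl_comap_embedding (f : W ↪ V) : (G.comap f)ᶜ = Gᶜ.comap f := by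
  ext i j
  simp [f.injective.ne_iff]

lemma IsNClique.map_of_comap {n : ℕ} {f : W ↪ V} {s : Finset W}
    (h : (G.comap f).IsNClique n s) : G.IsNClique n (s.map f) :=
  h.map.mono (map_comap_le f G)

section ThreeIndepFree

variable (h3 : Gᶜ.CliqueFree 3)
include h3

lemma adj_of_not_adj_of_not_adj {a x y : V} (hxy : x ≠ y) (hax : a ≠ x) (hay : a ≠ y)
    (hx : ¬ G.Adj a x) (hy : ¬ G.Adj a y) : G.Adj x y := by
  classical
  by_contra hxy'
  exact h3 {a, x, y} (is3Clique_triple_iff.mpr ⟨⟨hax, hx⟩, ⟨hay, hy⟩, ⟨hxy, hxy'⟩⟩)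

lemma exists_adj_of_card_eq_three {u : Finset V} (hu : #u = 3) :
    ∃ x ∈ u, ∃ y ∈ u, x ≠ y ∧ G.Adj x y := by
  classical
  obtain ⟨x, y, z, hxy, hxz, hyz, rfl⟩ := card_eq_three.mp hu
  by_cases hy : G.Adj x y
  · exact ⟨x, by simp, y, by simp, hxy, hy⟩
  by_cases hz : G.Adj x z
  · exact ⟨x, by simp, z, by simp, hxz, hz⟩
  exact ⟨y, by simp, z, by simp, hyz, adj_of_not_adj_of_not_adj h3 hyz hxy hxz hy hz⟩

lemma exists_isNClique_three_of_six_le_card {s : Finset V} (hs : 6 ≤ #s) :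
    ∃ A ⊆ s, G.IsNClique 3 A := by
  classical
  obtain ⟨a, ha⟩ : s.Nonempty := card_pos.mp (by omega)
  have hrest : #(s.erase a) = #s - 1 := card_erase_of_mem ha
  have hsplit := card_filter_add_card_filter_not (s := s.erase a) (G.Adj a)
  rcases (by omega : 3 ≤ #((s.erase a).filter (G.Adj a)) ∨
      3 ≤ #((s.erase a).filter (¬ G.Adj a ·))) with hN | hM
  · -- three neighbours of `a`: one edge among them closes a triangle through `a`
    obtain ⟨u, hu, hu3⟩ := exists_subset_card_eq hN
    obtain ⟨x, hx, y, hy, hxy, hadj⟩ := exists_adj_of_card_eq_three h3 hu3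
    have hx' := mem_filter.mp (hu hx)
    have hy' := mem_filter.mp (hu hy)
    refine ⟨{a, x, y}, ?_, is3Clique_triple_iff.mpr ⟨hx'.2, hy'.2, hadj⟩⟩
    simp only [insert_subset_iff, singleton_subset_iff]
    exact ⟨ha, mem_of_mem_erase hx'.1, mem_of_mem_erase hy'.1⟩
  · -- three non-neighbours of `a` are pairwise adjacent
    obtain ⟨u, hu, hu3⟩ := exists_subset_card_eq hM
    refine ⟨u, hu.trans ((filter_subset _ _).trans (erase_subset a s)), ?_, hu3⟩
    intro x hx y hy hxy
    have hx' := mem_filter.mp (hu hx)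
    have hy' := mem_filter.mp (hu hy)
    exact adj_of_not_adj_of_not_adj h3 hxy (ne_of_mem_erase hx'.1).symm
      (ne_of_mem_erase hy'.1).symm hx'.2 hy'.2

end ThreeIndepFree

lemma hasCoK3tP1_of_isNClique {t : ℕ} {w : V} {A B : Finset V}
    (hA : G.IsNClique 3 A) (hB : G.IsNClique t B) (hAB : Disjoint A B)
    (hwA : ∀ a ∈ A, G.Adj w a) (hwB : ∀ b ∈ B, G.Adj w b)
    (hanti : ∀ a ∈ A, ∀ b ∈ B, ¬ G.Adj a b) : HasCoK3tP1 G t :=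
  ⟨w, A, B, hA.card_eq, hB.card_eq, hAB, fun hw => (hwA w hw).ne rfl,
    fun hw => (hwB w hw).ne rfl, fun _ ha _ ha' h => hA.isClique ha ha' h,
    fun _ hb _ hb' h => hB.isClique hb hb' h, hwA, hwB, hanti⟩

end SimpleGraph

theorem stmt13_general {V : Type} (G : SimpleGraph V) (t : ℕ)
    (h3P1free : Gᶜ.CliqueFree 3)
    (hfree : ¬ HasCoK3tP1 G t)
    (SP SQ : Set V) (v : V)
    (hvP : ∀ x ∈ SP, G.Adj v x) (hvQ : ∀ x ∈ SQ, G.Adj v x)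
    (R : ℕ)
    -- `R` has the Ramsey property of `R(3, t)`: every graph on `R` vertices contains
    -- an independent set of size 3 or a clique of size `t`
    (hRam : ∀ H : SimpleGraph (Fin R),
      (∃ s : Finset (Fin R), Hᶜ.IsNClique 3 s) ∨ (∃ s : Finset (Fin R), H.IsNClique t s)) :
    ¬ ∃ p q : Fin (R + 6) → V,
      Function.Injective p ∧ Function.Injective q ∧
      (∀ i j : Fin (R + 6), p i ≠ q j) ∧
      (∀ i, p i ∈ SP) ∧ (∀ i, q i ∈ SQ) ∧
      (∀ i, G.Adj (p i) (q i)) ∧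
      (∀ i j : Fin (R + 6), i ≠ j → ¬ G.Adj (p i) (q j)) := by
  rintro ⟨p, q, hp, hq, hpq, hpP, hqQ, -, hind⟩
  let fQ : Fin R ↪ V := (Fin.castAddEmb 6).trans ⟨q, hq⟩
  let fP : Fin 6 ↪ V := (Fin.natAddEmb R).trans ⟨p, hp⟩
  obtain ⟨s, hs⟩ := (hRam (G.comap fQ)).resolve_left fun ⟨s, hs⟩ =>
    h3P1free _ (by rw [compl_comap_embedding] at hs; exact hs.map_of_comap)
  obtain ⟨A, hA, hA3⟩ :=
    exists_isNClique_three_of_six_le_card h3P1free (s := univ.map fP) (by simp)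
  have hAp : ∀ a ∈ A, ∃ i, a = p (Fin.natAdd R i) := fun a ha => by
    obtain ⟨i, -, rfl⟩ := mem_map.mp (hA ha); exact ⟨i, rfl⟩
  have hBq : ∀ b ∈ s.map fQ, ∃ j, b = q (Fin.castAdd 6 j) := fun b hb => by
    obtain ⟨j, -, rfl⟩ := mem_map.mp hb; exact ⟨j, rfl⟩
  refine hfree (hasCoK3tP1_of_isNClique (w := v) hA3 hs.map_of_comap ?_ ?_ ?_ ?_)
  · refine disjoint_left.mpr fun x hxA hxB => ?_
    obtain ⟨i, rfl⟩ := hAp x hxA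
    obtain ⟨j, hj⟩ := hBq _ hxB
    exact hpq _ _ hj
  · exact fun a ha => by obtain ⟨i, rfl⟩ := hAp a ha; exact hvP _ (hpP _)
  · exact fun b hb => by obtain ⟨j, rfl⟩ := hBq b hb; exact hvQ _ (hqQ _)
  · intro a ha b hb
    obtain ⟨i, rfl⟩ := hAp a ha
    obtain ⟨j, rfl⟩ := hBq b hb
    exact hind _ _ fun h => by have := congrArg Fin.val h; simp at this; omega

theorem stmt13 {V : Type} (G : SimpleGraph V) (t : ℕ) (ht : 2 ≤ t)
    (h3P1free : Gᶜ.CliqueFree 3)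
    (hfree : ¬ HasCoK3tP1 G t)
    (SP SQ : Set V) (v : V)
    (hvP : ∀ x ∈ SP, G.Adj v x) (hvQ : ∀ x ∈ SQ, G.Adj v x)
    (R : ℕ)
    -- `R` has the Ramsey property of `R(3, t)`: every graph on `R` vertices contains
    -- an independent set of size 3 or a clique of size `t`
    (hRam : ∀ H : SimpleGraph (Fin R),
      (∃ s : Finset (Fin R), Hᶜ.IsNClique 3 s) ∨ (∃ s : Finset (Fin R), H.IsNClique t s)) :
    ¬ ∃ p q : Fin (R + 6) → V,
      Function.Injective p ∧ Function.Injective q ∧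
      (∀ i j : Fin (R + 6), p i ≠ q j) ∧
      (∀ i, p i ∈ SP) ∧ (∀ i, q i ∈ SQ) ∧
      (∀ i, G.Adj (p i) (q i)) ∧
      (∀ i j : Fin (R + 6), i ≠ j → ¬ G.Adj (p i) (q j)) :=
  stmt13_general G t h3P1free hfree SP SQ v hvP hvQ R hRam
end

section
/- Let H be a non-empty finite set of connected non-null graphs, G a graph, and H(G) the H-graph of G. Let x'_1y'_1, …, x'_ky'_k be a set of k edges of H(G) such that {x'_1, …, x'_k} and {y'_1, …, y'_k} are independent sets in H(G) and x'_i is non-adjacent to y'_j in H(G) for all i ≠ j (i.e., these edges form an induced matching in H(G) with the two sides independent). For a vertex h of H(G), let S(h) ⊆ V(G) be the vertex set of the corresponding subgraph of G. Then: (1) for i ≠ j, the sets S(x'_i) ∪ S(y'_i) and S(x'_j) ∪ S(y'_j) are disjoint and anticomplete in G; (2) for each i, the induced subgraph G[S(x'_i) ∪ S(y'_i)] is connected; and consequently (3) there exist edges x_1y_1, …, x_ky_k of G with x_i, y_i ∈ S(x'_i) ∪ S(y'_i) such that for i ≠ j the pairs {x_i, y_i} and {x_j, y_j} are disjoint and anticomplete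 in G. -/
/-!
Non-adjacency in the `H`-graph says exactly that the two vertex sets are disjoint and
anticomplete in `G`, and this property is stable under unions, which gives (1). Each member of
`H` is connected, so each `G[S(h)]` is; two of them meeting or joined by an edge have a connected
union, which gives (2). That union contains an edge: either `x'ᵢ, y'ᵢ` are joined by one, or they
share a vertex and, being distinct, cannot both be the one-vertex subgraph on it, so the connected
union has a second vertex.
-/

open SimpleGraph

/-- Adjacency in the `H`-graph of `G`: two distinct subgraphs are adjacent iff they share a
vertex or there is an edge of `G` connecting them. -/
def HGraphAdj {V : Type} (G : SimpleGraph V) (H₁ H₂ : G.Subgraph) : Prop :=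
  H₁ ≠ H₂ ∧ ((H₁.verts ∩ H₂.verts).Nonempty ∨
    ∃ u ∈ H₁.verts, ∃ v ∈ H₂.verts, G.Adj u v)

namespace SimpleGraph

def IsSeparated {V : Type*} (G : SimpleGraph V) (s t : Set V) : Prop :=
  Disjoint s t ∧ ∀ u ∈ s, ∀ v ∈ t, ¬ G.Adj u v

namespace IsSeparated

variable {V : Type*} {G : SimpleGraph V} {s t u : Set V}

lemma symm (h : G.IsSeparated s t) : G.IsSeparated t s :=
  ⟨h.1.symm, fun a ha b hb hab => h.2 b hb a ha hab.symm⟩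

lemma union_left (hs : G.IsSeparated s u) (ht : G.IsSeparated t u) :
    G.IsSeparated (s ∪ t) u :=
  ⟨Disjoint.union_left hs.1 ht.1, fun a ha => ha.elim (hs.2 a) (ht.2 a)⟩

lemma union_right (hs : G.IsSeparated u s) (ht : G.IsSeparated u t) :
    G.IsSeparated u (s ∪ t) :=
  (hs.symm.union_left ht.symm).symm

end IsSeparated

lemma Subgraph.connected_induce_verts_of_iso {V W : Type*} {G : SimpleGraph V}
    {H : G.Subgraph} {K : SimpleGraph W} (e : H.coe ≃g K) (hK : K.Connected) :
    (G.induce H.verts).Connected :=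
  (Subgraph.connected_iff'.mpr (e.connected_iff.mpr hK)).induce_verts

lemma Subgraph.nontrivial_verts_union_of_ne {V : Type*} {G : SimpleGraph V} {A B : G.Subgraph}
    (hne : A ≠ B) (hAB : (A.verts ∩ B.verts).Nonempty) : (A.verts ∪ B.verts).Nontrivial := by
  obtain ⟨u, huA, huB⟩ := hAB
  by_contra hsub
  rw [Set.not_nontrivial_iff] at hsub
  have hu : ∀ {a}, a ∈ A.verts ∪ B.verts → a = u := fun ha => hsub ha (Or.inl huA)
  have hA : ∀ a b, ¬ A.Adj a b := fun a b hab =>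
    hab.ne ((hu (Or.inl hab.fst_mem)).trans (hu (Or.inl hab.snd_mem)).symm)
  have hB : ∀ a b, ¬ B.Adj a b := fun a b hab =>
    hab.ne ((hu (Or.inr hab.fst_mem)).trans (hu (Or.inr hab.snd_mem)).symm)
  refine hne (Subgraph.ext ?_ ?_)
  · ext a
    exact ⟨fun ha => hu (Or.inl ha) ▸ huB, fun ha => hu (Or.inr ha) ▸ huA⟩
  · ext a b
    exact iff_of_false (hA a b) (hB a b)

end SimpleGraph

section HGraph

variable {V : Type} {G : SimpleGraph V} {A B C D : G.Subgraph}

lemma HGraphAdj.symm (h : HGraphAdj G A B) : HGraphAdj G B A := by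
  obtain ⟨hne, h | ⟨u, hu, v, hv, huv⟩⟩ := h
  · exact ⟨hne.symm, Or.inl (by rwa [Set.inter_comm])⟩
  · exact ⟨hne.symm, Or.inr ⟨v, hv, u, hu, huv.symm⟩⟩

lemma hGraphAdj_comm : HGraphAdj G A B ↔ HGraphAdj G B A :=
  ⟨HGraphAdj.symm, HGraphAdj.symm⟩

lemma isSeparated_verts_of_not_hGraphAdj (hne : A ≠ B) (h : ¬ HGraphAdj G A B) :
    G.IsSeparated A.verts B.verts := by
  simp only [HGraphAdj, not_and, not_or, Set.not_nonempty_iff_eq_empty, not_exists] at h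
  obtain ⟨hinter, hadj⟩ := h hne
  exact ⟨Set.disjoint_iff_inter_eq_empty.mpr hinter, fun u hu v hv => hadj u hu v hv⟩

lemma HGraphAdj.isSeparated_union_verts (hAB : HGraphAdj G A B) (hCD : HGraphAdj G C D)
    (hAC : ¬ HGraphAdj G A C) (hBD : ¬ HGraphAdj G B D) (hAD : ¬ HGraphAdj G A D)
    (hBC : ¬ HGraphAdj G B C) :
    G.IsSeparated (A.verts ∪ B.verts) (C.verts ∪ D.verts) := by
  have hAC' : A ≠ C := fun h => hAD (h ▸ hCD)
  have hAD' : A ≠ D := fun h => hBD (h ▸ hAB.symm)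
  have hBC' : B ≠ C := fun h => hAC (h ▸ hAB)
  have hBD' : B ≠ D := fun h => hAD (h ▸ hAB)
  exact .union_left
    (.union_right (isSeparated_verts_of_not_hGraphAdj hAC' hAC)
      (isSeparated_verts_of_not_hGraphAdj hAD' hAD))
    (.union_right (isSeparated_verts_of_not_hGraphAdj hBC' hBC)
      (isSeparated_verts_of_not_hGraphAdj hBD' hBD))

lemma HGraphAdj.connected_induce_union_verts (h : HGraphAdj G A B)
    (hA : (G.induce A.verts).Preconnected) (hB : (G.induce B.verts).Preconnected) :
    (G.induce (A.verts ∪ B.verts)).Connected := by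
  obtain ⟨-, hinter | ⟨u, hu, v, hv, huv⟩⟩ := h
  · exact induce_union_connected hA hB hinter
  · exact connected_induce_union hA hB hu hv huv

lemma HGraphAdj.exists_adj_of_connected (h : HGraphAdj G A B)
    (hconn : (G.induce (A.verts ∪ B.verts)).Connected) :
    ∃ u ∈ A.verts ∪ B.verts, ∃ v ∈ A.verts ∪ B.verts, G.Adj u v := by
  obtain ⟨hne, hinter | ⟨u, hu, v, hv, huv⟩⟩ := h
  · have := (Subgraph.nontrivial_verts_union_of_ne hne hinter).coe_sort
    obtain ⟨w, hw⟩ := hinter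
    obtain ⟨⟨v, hv⟩, hwv⟩ := hconn.preconnected.exists_adj_of_nontrivial ⟨w, Or.inl hw.1⟩
    exact ⟨w, Or.inl hw.1, v, hv, hwv⟩
  · exact ⟨u, Or.inl hu, v, Or.inr hv, huv⟩

end HGraph

theorem stmt14_general {V : Type} (G : SimpleGraph V)
    -- `H` is a non-empty finite set of connected non-null graphs
    {ι : Type} (n : ι → ℕ)
    (Hfam : ∀ i : ι, SimpleGraph (Fin (n i)))
    (hconn : ∀ i, (Hfam i).Connected)
    (k : ℕ) (x' y' : Fin k → G.Subgraph)
    -- the `x'ᵢ` and `y'ᵢ` are vertices of the `H`-graph of `G`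
    (hmemx : ∀ i, ∃ j, Nonempty ((x' i).coe ≃g Hfam j))
    (hmemy : ∀ i, ∃ j, Nonempty ((y' i).coe ≃g Hfam j))
    -- `x'ᵢ y'ᵢ` are edges of `H(G)` forming an induced matching with both sides independent
    (hadj : ∀ i, HGraphAdj G (x' i) (y' i))
    (hindx : ∀ i j, i ≠ j → ¬ HGraphAdj G (x' i) (x' j))
    (hindy : ∀ i j, i ≠ j → ¬ HGraphAdj G (y' i) (y' j))
    (hcross : ∀ i j, i ≠ j → ¬ HGraphAdj G (x' i) (y' j)) :
    -- (1) distinct pairs are disjoint and anticomplete in `G`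
    (∀ i j, i ≠ j →
      Disjoint ((x' i).verts ∪ (y' i).verts) ((x' j).verts ∪ (y' j).verts) ∧
      ∀ u ∈ (x' i).verts ∪ (y' i).verts, ∀ v ∈ (x' j).verts ∪ (y' j).verts,
        ¬ G.Adj u v) ∧
    -- (2) each `G[S(x'ᵢ) ∪ S(y'ᵢ)]` is connected
    (∀ i, (G.induce ((x' i).verts ∪ (y' i).verts)).Connected) ∧
    -- (3) there are edges `xᵢyᵢ` of `G`, one inside each `S(x'ᵢ) ∪ S(y'ᵢ)`, with distinct
    -- pairs disjoint and anticomplete in `G`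
    (∃ x y : Fin k → V,
      (∀ i, x i ∈ (x' i).verts ∪ (y' i).verts ∧ y i ∈ (x' i).verts ∪ (y' i).verts ∧
        G.Adj (x i) (y i)) ∧
      (∀ i j, i ≠ j →
        x i ≠ x j ∧ x i ≠ y j ∧ y i ≠ x j ∧ y i ≠ y j ∧
        ¬ G.Adj (x i) (x j) ∧ ¬ G.Adj (x i) (y j) ∧
        ¬ G.Adj (y i) (x j) ∧ ¬ G.Adj (y i) (y j))) := by
  have hsep : ∀ i j, i ≠ j →
      G.IsSeparated ((x' i).verts ∪ (y' i).verts) ((x' j).verts ∪ (y' j).verts) :=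
    fun i j hij => (hadj i).isSeparated_union_verts (hadj j) (hindx i j hij) (hindy i j hij)
      (hcross i j hij) (hGraphAdj_comm.not.mp (hcross j i hij.symm))
  have hunion : ∀ i, (G.induce ((x' i).verts ∪ (y' i).verts)).Connected := fun i => by
    obtain ⟨a, ⟨ea⟩⟩ := hmemx i
    obtain ⟨b, ⟨eb⟩⟩ := hmemy i
    exact (hadj i).connected_induce_union_verts
      (Subgraph.connected_induce_verts_of_iso ea (hconn a)).preconnected
      (Subgraph.connected_induce_verts_of_iso eb (hconn b)).preconnected
  refine ⟨hsep, hunion, ?_⟩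
  choose x hx y hy hxy using fun i => (hadj i).exists_adj_of_connected (hunion i)
  refine ⟨x, y, fun i => ⟨hx i, hy i, hxy i⟩, fun i j hij => ?_⟩
  obtain ⟨hdisj, hanti⟩ := hsep i j hij
  exact ⟨hdisj.ne_of_mem (hx i) (hx j), hdisj.ne_of_mem (hx i) (hy j),
    hdisj.ne_of_mem (hy i) (hx j), hdisj.ne_of_mem (hy i) (hy j),
    hanti _ (hx i) _ (hx j), hanti _ (hx i) _ (hy j),
    hanti _ (hy i) _ (hx j), hanti _ (hy i) _ (hy j)⟩

theorem stmt14 {V : Type} (G : SimpleGraph V)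
    -- `H` is a non-empty finite set of connected non-null graphs
    {ι : Type} [Fintype ι] [Nonempty ι] (n : ι → ℕ)
    (Hfam : ∀ i : ι, SimpleGraph (Fin (n i)))
    (hconn : ∀ i, (Hfam i).Connected) (hpos : ∀ i, 0 < n i)
    (k : ℕ) (x' y' : Fin k → G.Subgraph)
    -- the `x'ᵢ` and `y'ᵢ` are vertices of the `H`-graph of `G`
    (hmemx : ∀ i, ∃ j, Nonempty ((x' i).coe ≃g Hfam j))
    (hmemy : ∀ i, ∃ j, Nonempty ((y' i).coe ≃g Hfam j))
    -- `x'ᵢ y'ᵢ` are edges of `H(G)` forming an induced matching with both sides independent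
    (hadj : ∀ i, HGraphAdj G (x' i) (y' i))
    (hindx : ∀ i j, i ≠ j → ¬ HGraphAdj G (x' i) (x' j))
    (hindy : ∀ i j, i ≠ j → ¬ HGraphAdj G (y' i) (y' j))
    (hcross : ∀ i j, i ≠ j → ¬ HGraphAdj G (x' i) (y' j)) :
    -- (1) distinct pairs are disjoint and anticomplete in `G`
    (∀ i j, i ≠ j →
      Disjoint ((x' i).verts ∪ (y' i).verts) ((x' j).verts ∪ (y' j).verts) ∧
      ∀ u ∈ (x' i).verts ∪ (y' i).verts, ∀ v ∈ (x' j).verts ∪ (y' j).verts,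
        ¬ G.Adj u v) ∧
    -- (2) each `G[S(x'ᵢ) ∪ S(y'ᵢ)]` is connected
    (∀ i, (G.induce ((x' i).verts ∪ (y' i).verts)).Connected) ∧
    -- (3) there are edges `xᵢyᵢ` of `G`, one inside each `S(x'ᵢ) ∪ S(y'ᵢ)`, with distinct
    -- pairs disjoint and anticomplete in `G`
    (∃ x y : Fin k → V,
      (∀ i, x i ∈ (x' i).verts ∪ (y' i).verts ∧ y i ∈ (x' i).verts ∪ (y' i).verts ∧
        G.Adj (x i) (y i)) ∧
      (∀ i j, i ≠ j →
        x i ≠ x j ∧ x i ≠ y j ∧ y i ≠ x j ∧ y i ≠ y j ∧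
        ¬ G.Adj (x i) (x j) ∧ ¬ G.Adj (x i) (y j) ∧
        ¬ G.Adj (y i) (x j) ∧ ¬ G.Adj (y i) (y j))) :=
  stmt14_general G n Hfam hconn k x' y' hmemx hmemy hadj hindx hindy hcross
end

section
/- Let G be a 4P_1-free graph. For any subsets S_α and S_β of V(G) such that some vertex v_i of G is complete to both S_α and S_β (and v_i ∉ S_α ∪ S_β), and assuming G has no induced subgraph isomorphic to the complement of (K_{2,t} + P_1) for some t ≥ 2: there is no induced matching of size R(4,t) + 4 between S_α and S_β, where R(4,t) is the Ramsey number (every graph on R(4,t) vertices has an independent set of size 4 or a clique of size t). -/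
open SimpleGraph

/-!
Take the last four `p`-vertices: since `G` is `4P₁`-free, two of them, `a₁` and `a₂`, are
adjacent. Applying the Ramsey property to the first `R` `q`-vertices, again `4P₁`-freeness
forces a clique `B` of size `t` among them. The common neighbour `vi`, the edge `a₁a₂` and `B`
induce the complement of `K_{2,t} + P₁`, since the matching is induced.
-/

namespace SimpleGraph

variable {V : Type*} {G : SimpleGraph V}

theorem exists_adj_of_compl_cliqueFree {n : ℕ} (h : Gᶜ.CliqueFree n) (f : Fin n ↪ V) :
    ∃ i j, i ≠ j ∧ G.Adj (f i) (f j) := by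
  by_contra! hf
  refine h (Finset.univ.map f) ⟨?_, by simp⟩
  simp only [Finset.coe_map, Finset.coe_univ, Set.image_univ]
  rintro _ ⟨i, rfl⟩ _ ⟨j, rfl⟩ hij
  exact ⟨hij, hf i j (ne_of_apply_ne f hij)⟩

theorem exists_isNClique_map_of_ramsey {R s t : ℕ}
    (hRam : ∀ H : SimpleGraph (Fin R),
      (∃ u : Finset (Fin R), Hᶜ.IsNClique s u) ∨ (∃ u : Finset (Fin R), H.IsNClique t u))
    (h : Gᶜ.CliqueFree s) (f : Fin R ↪ V) : ∃ u : Finset (Fin R), G.IsNClique t (u.map f) := by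
  rcases hRam (G.comap f) with ⟨u, hu⟩ | ⟨u, hu⟩
  · exact (h.comap (Embedding.complEquiv (Embedding.comap f G)).isContained u hu).elim
  · exact ⟨u, hu.map.mono (map_comap_le f G)⟩

end SimpleGraph

theorem hasCoK2tP1_of_adj_of_isNClique {V : Type} {ι : Type*} {G : SimpleGraph V} {t : ℕ}
    {p : ι → V} {q : ι ↪ V} {w : V} {i₁ i₂ : ι} {s : Finset ι} (hpq : ∀ i j, p i ≠ q j)
    (hinduced : ∀ i j, i ≠ j → ¬ G.Adj (p i) (q j))
    (hwp : ∀ i, G.Adj w (p i)) (hwq : ∀ i, G.Adj w (q i))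
    (hp : G.Adj (p i₁) (p i₂)) (hi₁ : i₁ ∉ s) (hi₂ : i₂ ∉ s) (hs : G.IsNClique t (s.map q)) :
    HasCoK2tP1 G t := by
  have hnotin : ∀ i ∉ s, p i ∉ s.map q := by
    simp only [Finset.mem_map]
    rintro i - ⟨j, -, hj⟩
    exact hpq i j hj.symm
  refine ⟨w, p i₁, p i₂, s.map q, hs.card_eq, hp.ne, hp, ?_, hnotin i₁ hi₁, hnotin i₂ hi₂,
    (hwp i₁).ne, (hwp i₂).ne, hwp i₁, hwp i₂, ?_, fun b hb b' hb' hbb' => hs.isClique hb hb' hbb',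
    ?_⟩
  · simp only [Finset.mem_map, not_exists, not_and]
    rintro j - rfl
    exact (hwq j).ne rfl
  · simp only [Finset.mem_map]
    rintro _ ⟨j, -, rfl⟩
    exact hwq j
  · simp only [Finset.mem_map]
    rintro _ ⟨j, hj, rfl⟩
    exact ⟨hinduced i₁ j (ne_of_mem_of_not_mem hj hi₁).symm,
      hinduced i₂ j (ne_of_mem_of_not_mem hj hi₂).symm⟩

theorem stmt16_general {V : Type} (G : SimpleGraph V) (t : ℕ)
    (h4P1free : Gᶜ.CliqueFree 4)
    (hfree : ¬ HasCoK2tP1 G t)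
    (Sα Sβ : Set V) (vi : V)
    (hvα : ∀ x ∈ Sα, G.Adj vi x) (hvβ : ∀ x ∈ Sβ, G.Adj vi x)
    (R : ℕ)
    -- `R` has the Ramsey property of `R(4, t)`: every graph on `R` vertices contains
    -- an independent set of size 4 or a clique of size `t`
    (hRam : ∀ H : SimpleGraph (Fin R),
      (∃ s : Finset (Fin R), Hᶜ.IsNClique 4 s) ∨ (∃ s : Finset (Fin R), H.IsNClique t s)) :
    ¬ ∃ p q : Fin (R + 4) → V,
      Function.Injective p ∧ Function.Injective q ∧
      (∀ i j : Fin (R + 4), p i ≠ q j) ∧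
      (∀ i, p i ∈ Sα) ∧ (∀ i, q i ∈ Sβ) ∧
      (∀ i, G.Adj (p i) (q i)) ∧
      (∀ i j : Fin (R + 4), i ≠ j → ¬ G.Adj (p i) (q j)) := by
  rintro ⟨p, q, hp, hq, hpq, hpα, hqβ, -, hinduced⟩
  let q' : Fin (R + 4) ↪ V := ⟨q, hq⟩
  obtain ⟨s, hs⟩ := exists_isNClique_map_of_ramsey hRam h4P1free ((Fin.castAddEmb 4).trans q')
  obtain ⟨k₁, k₂, -, hk⟩ := 
    exists_adj_of_compl_cliqueFree h4P1free ((Fin.natAddEmb R).trans ⟨p, hp⟩)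
  have hnotin : ∀ k : Fin 4, Fin.natAdd R k ∉ s.map (Fin.castAddEmb 4) := by
    simp [Fin.ext_iff]
    omega
  rw [← Finset.map_map] at hs
  exact hfree (hasCoK2tP1_of_adj_of_isNClique (q := q') hpq hinduced (fun i => hvα _ (hpα i))
    (fun i => hvβ _ (hqβ i)) hk (hnotin k₁) (hnotin k₂) hs)

theorem stmt16 {V : Type} (G : SimpleGraph V) (t : ℕ) (ht : 2 ≤ t)
    (h4P1free : Gᶜ.CliqueFree 4)
    (hfree : ¬ HasCoK2tP1 G t)
    (Sα Sβ : Set V) (vi : V) (hvi : vi ∉ Sα ∪ Sβ)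
    (hvα : ∀ x ∈ Sα, G.Adj vi x) (hvβ : ∀ x ∈ Sβ, G.Adj vi x)
    (R : ℕ)
    -- `R` has the Ramsey property of `R(4, t)`: every graph on `R` vertices contains
    -- an independent set of size 4 or a clique of size `t`
    (hRam : ∀ H : SimpleGraph (Fin R),
      (∃ s : Finset (Fin R), Hᶜ.IsNClique 4 s) ∨ (∃ s : Finset (Fin R), H.IsNClique t s)) :
    ¬ ∃ p q : Fin (R + 4) → V,
      Function.Injective p ∧ Function.Injective q ∧
      (∀ i j : Fin (R + 4), p i ≠ q j) ∧
      (∀ i, p i ∈ Sα) ∧ (∀ i, q i ∈ Sβ) ∧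
      (∀ i, G.Adj (p i) (q i)) ∧
      (∀ i j : Fin (R + 4), i ≠ j → ¬ G.Adj (p i) (q j)) :=
  stmt16_general G t h4P1free hfree Sα Sβ vi hvα hvβ R hRam
end

section
/- Let G be a graph vertex-partitioned into five independent sets X, Y, A, B, C such that: X is anticomplete to Y; A, B, C are pairwise anticomplete; G has no cycle of length 4 (so each pair of vertices x ∈ X, y ∈ Y has at most one common neighbour in A ∪ B ∪ C). Let G'' be obtained from G by adding all edges between X and Y, and, for each pair of distinct classes R, S ∈ {A, B, C}, all edges rs with r ∈ R, s ∈ S except certain excluded pairs, where the exclusion relation satisfies: for any two distinct vertices u_1, u_2 in a common class of {A, B, C} and any vertex u_3 in a different class of {A, B, C}, u_3 is adjacent in G'' to at least one of u_1, u_2. Then G'' contains no induced subgraph isomorphic to 2P_3 + P_2 (two disjoint paths on three vertices plus a disjoint edge, pairwise anticomplete), given additionally that: each class of {A, B, C} is independent in G'', each vertex of A ∪ B ∪ C has at most one neighbour in X and at most one in Y in G'', and the edges of G'' between X ∪ Y and A ∪ B ∪ C are exactly those of G, and it is known that in any induced copy of P_3 + P_2 in G'' the middle vertex of the P_3 lies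 in X ∪ Y and at least one endpoint of the P_3 lies in X ∪ Y. -/
open SimpleGraph

/-- `S` is anticomplete to `T` in `G`. -/
def Anticomplete {V : Type} (G : SimpleGraph V) (S T : Set V) : Prop :=
  ∀ u ∈ S, ∀ v ∈ T, ¬ G.Adj u v

/-- `u` and `v` lie in the same class among `A`, `B`, `C`. -/
def SameClass {V : Type} (A B C : Set V) (u v : V) : Prop :=
  (u ∈ A ∧ v ∈ A) ∨ (u ∈ B ∧ v ∈ B) ∨ (u ∈ C ∧ v ∈ C)

/-!
Each of the two `P₃`'s of an induced `2P₃ + P₂`, together with the `P₂`, is an induced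
`P₃ + P₂`, so both middle vertices and an endpoint of the first `P₃` lie in `X ∪ Y`.
In `X ∪ Y` the graph is complete bipartite between `X` and `Y`, so the middle vertex of the
second `P₃` is adjacent to one end of the edge formed by the middle vertex and that endpoint
of the first `P₃`, although the two paths are anticomplete.
-/

theorem IsInducedPattern.comp {V : Type} {G : SimpleGraph V} {m n : ℕ}
    {E : Set (Sym2 (Fin n))} {E' : Set (Sym2 (Fin m))} {f : Fin n → V}
    (hf : IsInducedPattern G E f) {g : Fin m → Fin n} (hg : Function.Injective g)
    (hgE : ∀ i j, s(g i, g j) ∈ E ↔ s(i, j) ∈ E') :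
    IsInducedPattern G E' (f ∘ g) :=
  ⟨hf.1.comp hg, fun i j => (hf.2 (g i) (g j)).trans (hgE i j)⟩

theorem adj_or_adj_of_adj_of_mem_union {V : Type} {G : SimpleGraph V} {X Y : Set V}
    (hXY : ∀ u ∈ X, ∀ v ∈ Y, G.Adj u v) (hX : IndepIn G X) (hY : IndepIn G Y)
    {u v w : V} (hu : u ∈ X ∪ Y) (hv : v ∈ X ∪ Y) (hw : w ∈ X ∪ Y) (huv : G.Adj u v) :
    G.Adj w u ∨ G.Adj w v := by
  rcases hu with hu | hu <;> rcases hv with hv | hv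
  · exact (hX u hu v hv huv).elim
  · rcases hw with hw | hw
    · exact .inr (hXY w hw v hv)
    · exact .inl (hXY u hu w hw).symm
  · rcases hw with hw | hw
    · exact .inl (hXY w hw u hu)
    · exact .inr (hXY v hv w hw).symm
  · exact (hY u hu v hv huv).elim

theorem stmt17_general {V : Type} (G'' : SimpleGraph V) (X Y : Set V)
    -- `G''` adds all edges between `X` and `Y`
    (hXYcomplete : ∀ u ∈ X, ∀ v ∈ Y, G''.Adj u v)
    -- in `G''`, `X` and `Y` remain independent
    (hXindep : IndepIn G'' X) (hYindep : IndepIn G'' Y)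
    -- in any induced copy of `P₃ + P₂` in `G''`, the middle vertex of the `P₃` lies in
    -- `X ∪ Y` and at least one endpoint of the `P₃` lies in `X ∪ Y`
    (hP3P2 : ∀ f : Fin 5 → V,
      IsInducedPattern G'' ({s(0, 1), s(1, 2), s(3, 4)} : Set (Sym2 (Fin 5))) f →
      f 1 ∈ X ∪ Y ∧ (f 0 ∈ X ∪ Y ∨ f 2 ∈ X ∪ Y)) :
    -- `G''` has no induced copy of `2P₃ + P₂`
    ¬ ∃ f : Fin 8 → V, IsInducedPattern G''
      ({s(0, 1), s(1, 2), s(3, 4), s(5, 6), s(6, 7)} : Set (Sym2 (Fin 8))) f := by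
  rintro ⟨f, hf⟩
  obtain ⟨h1, hend⟩ := hP3P2 _ (hf.comp (g := ![0, 1, 2, 3, 4]) (by decide)
    (by simp only [Set.mem_insert_iff, Set.mem_singleton_iff]; decide))
  obtain ⟨h6, -⟩ := hP3P2 _ (hf.comp (g := ![5, 6, 7, 3, 4]) (by decide)
    (by simp only [Set.mem_insert_iff, Set.mem_singleton_iff]; decide))
  obtain ⟨i, hi, he⟩ : ∃ i : Fin 8, (i = 0 ∨ i = 2) ∧ f i ∈ X ∪ Y := by
    rcases hend with h | h
    exacts [⟨0, .inl rfl, h⟩, ⟨2, .inr rfl, h⟩]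
  have h61 := adj_or_adj_of_adj_of_mem_union hXYcomplete hXindep hYindep h1 he h6
    ((hf.2 1 i).2 (by rcases hi with rfl | rfl <;> simp))
  rcases hi with rfl | rfl <;> simp [hf.2] at h61

theorem stmt17 {V : Type} (G G'' : SimpleGraph V) (X Y A B C : Set V)
    -- `X, Y, A, B, C` partition `V(G)` into independent sets
    (hdisj : ∀ i j : Fin 5, i ≠ j →
      Disjoint (![X, Y, A, B, C] i) (![X, Y, A, B, C] j))
    (hcover : X ∪ Y ∪ A ∪ B ∪ C = Set.univ)
    (hindepG : ∀ i : Fin 5, IndepIn G (![X, Y, A, B, C] i))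
    -- `X` is anticomplete to `Y` and `A, B, C` are pairwise anticomplete in `G`
    (hXY : Anticomplete G X Y)
    (hAB : Anticomplete G A B) (hAC : Anticomplete G A C) (hBC : Anticomplete G B C)
    -- `G` has no cycle of length 4
    (hC4 : ∀ a b c d : V, a ≠ c → b ≠ d →
      G.Adj a b → G.Adj b c → G.Adj c d → G.Adj d a → False)
    -- `G''` adds all edges between `X` and `Y`
    (hXYcomplete : ∀ u ∈ X, ∀ v ∈ Y, G''.Adj u v)
    -- in `G''`, `X` and `Y` remain independent
    (hXindep : IndepIn G'' X) (hYindep : IndepIn G'' Y)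
    -- exclusion property: a vertex of one class of `{A, B, C}` is adjacent in `G''`
    -- to at least one of any two distinct vertices of another class
    (hexcl : ∀ u₁ u₂ u₃ : V, u₁ ≠ u₂ → SameClass A B C u₁ u₂ →
      u₃ ∈ A ∪ B ∪ C → ¬ SameClass A B C u₃ u₁ →
      (G''.Adj u₃ u₁ ∨ G''.Adj u₃ u₂))
    -- each class of `{A, B, C}` is independent in `G''`
    (hAindep : IndepIn G'' A) (hBindep : IndepIn G'' B) (hCindep : IndepIn G'' C)
    -- each vertex of `A ∪ B ∪ C` has at most one `G''`-neighbour in `X` and in `Y`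
    (hdeg : ∀ v ∈ A ∪ B ∪ C,
      (G''.neighborSet v ∩ X).Subsingleton ∧ (G''.neighborSet v ∩ Y).Subsingleton)
    -- the edges of `G''` between `X ∪ Y` and `A ∪ B ∪ C` are exactly those of `G`
    (hcrossG : ∀ u ∈ X ∪ Y, ∀ v ∈ A ∪ B ∪ C, (G''.Adj u v ↔ G.Adj u v))
    -- in any induced copy of `P₃ + P₂` in `G''`, the middle vertex of the `P₃` lies in
    -- `X ∪ Y` and at least one endpoint of the `P₃` lies in `X ∪ Y`
    (hP3P2 : ∀ f : Fin 5 → V,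
      IsInducedPattern G'' ({s(0, 1), s(1, 2), s(3, 4)} : Set (Sym2 (Fin 5))) f →
      f 1 ∈ X ∪ Y ∧ (f 0 ∈ X ∪ Y ∨ f 2 ∈ X ∪ Y)) :
    -- `G''` has no induced copy of `2P₃ + P₂`
    ¬ ∃ f : Fin 8 → V, IsInducedPattern G''
      ({s(0, 1), s(1, 2), s(3, 4), s(5, 6), s(6, 7)} : Set (Sym2 (Fin 8))) f :=
  stmt17_general G'' X Y hXYcomplete hXindep hYindep hP3P2
end
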